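/- Let B be a separable Frobenius algebra over k with separability idempotent p = Σ p⁽¹⁾ ⊗ p⁽²⁾ and counit δ. Then B ⊗ B^op is a weak Hopf algebra with: the tensor product algebra structure (multiplication (a⊗b)(a'⊗b') = aa' ⊗ b'b), comultiplication Δ(a ⊗ b) = Σ (a ⊗ p⁽¹⁾) ⊗ (p⁽²⁾ ⊗ b), counit ε(a ⊗ b) = δ(ab), and antipode S(a ⊗ b) = b ⊗ τ(a), where τ(a) = Σ δ(a·p⁽²⁾)·p⁽¹⁾ is the Nakayama automorphism of B. -/

import Mathlib

/-! Write `p = s 1 = Σ eᵢ ⊗ fᵢ`. The bimodule property of `s` makes `p` a Casimir element,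
`Σ eᵢ ⊗ fᵢx = Σ xeᵢ ⊗ fᵢ`; the counit laws say that `(eᵢ)` and `(fᵢ)` are dual bases for the
pairing `δ(xy)`; separability says `Σ eᵢfᵢ = 1`. On pure tensors every weak Hopf axiom for
`B ⊗ Bᵐᵒᵖ` collapses to one of these identities or to two consequences of them: `p` is idempotent
in `B ⊗ Bᵐᵒᵖ`, which makes `Δ` multiplicative, and `Σ τ(fᵢ)eᵢ = 1`, which is what the antipode
axioms need. -/

open TensorProduct

noncomputable section

variable (k A : Type*) [Field k] [AddCommGroup A] [Module k A]

/-- The linearization `A ⊗ A →ₗ A` of a bilinear multiplication. -/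
def m2 (mul : A →ₗ[k] A →ₗ[k] A) : A ⊗[k] A →ₗ[k] A := TensorProduct.lift mul

/-- Componentwise multiplication on `A ⊗ A` induced by a bilinear multiplication on `A`. -/
def mulT (mul : A →ₗ[k] A →ₗ[k] A) :
    (A ⊗[k] A) →ₗ[k] (A ⊗[k] A) →ₗ[k] (A ⊗[k] A) :=
  TensorProduct.curry ((TensorProduct.map (m2 k A mul) (m2 k A mul)) ∘ₗ
    (TensorProduct.tensorTensorTensorComm k A A A A).toLinearMap)

/-- Componentwise multiplication on `A ⊗ (A ⊗ A)`. -/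
def mulT3 (mul : A →ₗ[k] A →ₗ[k] A) :
    (A ⊗[k] (A ⊗[k] A)) →ₗ[k] (A ⊗[k] (A ⊗[k] A)) →ₗ[k] (A ⊗[k] (A ⊗[k] A)) :=
  TensorProduct.curry
    ((TensorProduct.map (m2 k A mul) (TensorProduct.lift (mulT k A mul))) ∘ₗ
      (TensorProduct.tensorTensorTensorComm k A (A ⊗[k] A) A (A ⊗[k] A)).toLinearMap)

/-- The full set of axioms of a weak Hopf algebra over `k` on a vector space `A`, for
explicitly given structure maps: an associative unital multiplication, a coassociative
counital comultiplication, the three weak bialgebra axioms, and the three antipode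
axioms `Σ x₍₁₎S(x₍₂₎) = Σ ε(1₍₁₎x)1₍₂₎`, `Σ S(x₍₁₎)x₍₂₎ = Σ 1₍₁₎ε(x1₍₂₎)`,
`Σ S(x₍₁₎)x₍₂₎S(x₍₃₎) = S(x)`. -/
structure IsWeakHopf (mul : A →ₗ[k] A →ₗ[k] A) (one : A)
    (comul : A →ₗ[k] A ⊗[k] A) (counit : A →ₗ[k] k) (S : A →ₗ[k] A) : Prop where
  mul_assoc' : ∀ x y z : A, mul (mul x y) z = mul x (mul y z)
  one_mul' : ∀ x : A, mul one x = x
  mul_one' : ∀ x : A, mul x one = x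
  coassoc' : (TensorProduct.assoc k A A A).toLinearMap ∘ₗ comul.rTensor A ∘ₗ comul
      = LinearMap.lTensor A comul ∘ₗ comul
  counit_comul' : ∀ x : A, (TensorProduct.lid k A) ((counit.rTensor A) (comul x)) = x
  comul_counit' : ∀ x : A, (TensorProduct.rid k A) ((LinearMap.lTensor A counit) (comul x)) = x
  comul_mul : ∀ x y : A, comul (mul x y) = mulT k A mul (comul x) (comul y)
  weak_counit₁ : ∀ x y z : A, LinearMap.mul' k k
      ((TensorProduct.map (counit ∘ₗ mul x) (counit ∘ₗ mul.flip z)) (comul y))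
      = counit (mul (mul x y) z)
  weak_counit₂ : ∀ x y z : A, LinearMap.mul' k k
      ((TensorProduct.map (counit ∘ₗ mul.flip z) (counit ∘ₗ mul x)) (comul y))
      = counit (mul (mul x y) z)
  weak_unit₁ : mulT3 k A mul
      ((TensorProduct.map LinearMap.id ((TensorProduct.mk k A A).flip one)) (comul one))
      ((TensorProduct.mk k A (A ⊗[k] A) one) (comul one))
      = (LinearMap.lTensor A comul) (comul one)
  weak_unit₂ : mulT3 k A mul
      ((TensorProduct.mk k A (A ⊗[k] A) one) (comul one))
      ((TensorProduct.map LinearMap.id ((TensorProduct.mk k A A).flip one)) (comul one))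
      = (LinearMap.lTensor A comul) (comul one)
  antipode₁ : ∀ x : A, m2 k A mul ((LinearMap.lTensor A S) (comul x))
      = (TensorProduct.lid k A)
          ((TensorProduct.map (counit ∘ₗ mul.flip x) LinearMap.id) (comul one))
  antipode₂ : ∀ x : A, m2 k A mul ((S.rTensor A) (comul x))
      = (TensorProduct.rid k A)
          ((TensorProduct.map LinearMap.id (counit ∘ₗ mul x)) (comul one))
  antipode₃ : ∀ x : A, m2 k A mul
      ((TensorProduct.map S (m2 k A mul ∘ₗ LinearMap.lTensor A S))
        ((LinearMap.lTensor A comul) (comul x))) = S x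

theorem m2_tmul (mul : A →ₗ[k] A →ₗ[k] A) (x y : A) :
    m2 k A mul (x ⊗ₜ[k] y) = mul x y := rfl

theorem mulT_tmul (mul : A →ₗ[k] A →ₗ[k] A) (x y x' y' : A) :
    mulT k A mul (x ⊗ₜ[k] y) (x' ⊗ₜ[k] y') = mul x x' ⊗ₜ[k] mul y y' := rfl

theorem mulT3_tmul (mul : A →ₗ[k] A →ₗ[k] A) (x x' : A) (y y' : A ⊗[k] A) :
    mulT3 k A mul (x ⊗ₜ[k] y) (x' ⊗ₜ[k] y') = mul x x' ⊗ₜ[k] mulT k A mul y y' := rfl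

end

noncomputable section

open MulOpposite

variable (k : Type*) [Field k] (B : Type*) [Ring B] [Algebra k B]

/-- The element `Σ (1 ⊗ op p⁽¹⁾) ⊗ (p⁽²⁾ ⊗ op 1)` of `(B ⊗ Bᵐᵒᵖ) ⊗ (B ⊗ Bᵐᵒᵖ)`. -/
def sepE (s : B →ₗ[k] B ⊗[k] B) : (B ⊗[k] Bᵐᵒᵖ) ⊗[k] (B ⊗[k] Bᵐᵒᵖ) :=
  (TensorProduct.map
    ((TensorProduct.mk k B Bᵐᵒᵖ 1) ∘ₗ (opLinearEquiv k (M := B)).toLinearMap)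
    ((TensorProduct.mk k B Bᵐᵒᵖ).flip (op 1))) (s 1)

/-- The comultiplication `Δ(a ⊗ b) = Σ (a ⊗ p⁽¹⁾) ⊗ (p⁽²⁾ ⊗ b)` on `B ⊗ Bᵐᵒᵖ`. -/
def bopComul (s : B →ₗ[k] B ⊗[k] B) :
    B ⊗[k] Bᵐᵒᵖ →ₗ[k] (B ⊗[k] Bᵐᵒᵖ) ⊗[k] (B ⊗[k] Bᵐᵒᵖ) :=
  LinearMap.mulRight k (sepE k B s) ∘ₗ
    TensorProduct.map
      ((TensorProduct.mk k B Bᵐᵒᵖ).flip (op 1))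
      (TensorProduct.mk k B Bᵐᵒᵖ 1)

/-- The counit `ε(a ⊗ b) = δ(ab)` on `B ⊗ Bᵐᵒᵖ`. -/
def bopCounit (δ : B →ₗ[k] k) : B ⊗[k] Bᵐᵒᵖ →ₗ[k] k :=
  δ ∘ₗ LinearMap.mul' k B ∘ₗ
    TensorProduct.map LinearMap.id (opLinearEquiv k (M := B)).symm.toLinearMap

/-- The Nakayama automorphism `τ(a) = Σ δ(a p⁽²⁾) p⁽¹⁾` of `B`. -/
def nakayama (s : B →ₗ[k] B ⊗[k] B) (δ : B →ₗ[k] k) : B →ₗ[k] B :=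
  (TensorProduct.rid k B).toLinearMap ∘ₗ TensorProduct.map LinearMap.id δ
    ∘ₗ LinearMap.mulRight k (s 1) ∘ₗ TensorProduct.mk k B B 1

/-- The antipode `S(a ⊗ b) = b ⊗ τ(a)` on `B ⊗ Bᵐᵒᵖ`. -/
def bopAntipode (s : B →ₗ[k] B ⊗[k] B) (δ : B →ₗ[k] k) :
    B ⊗[k] Bᵐᵒᵖ →ₗ[k] B ⊗[k] Bᵐᵒᵖ :=
  (TensorProduct.comm k Bᵐᵒᵖ B).toLinearMap ∘ₗ
    TensorProduct.map
      ((opLinearEquiv k (M := B)).toLinearMap ∘ₗ nakayama k B s δ)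
      (opLinearEquiv k (M := B)).symm.toLinearMap

section

variable {k B}

/-- The identities satisfied by a presentation `Σ_{i ∈ T} i.1 ⊗ i.2` of the separability
idempotent of a separable Frobenius algebra with counit `δ`. -/
structure IsSeparableFrobeniusBasis (δ : B →ₗ[k] k) (T : Finset (B × B)) : Prop where
  casimir : ∀ x : B, ∑ i ∈ T, i.1 ⊗ₜ[k] (i.2 * x) = ∑ i ∈ T, (x * i.1) ⊗ₜ[k] i.2
  sum_counit_mul_fst_smul : ∀ x : B, ∑ i ∈ T, δ (x * i.1) • i.2 = x
  sum_counit_snd_mul_smul : ∀ x : B, ∑ i ∈ T, δ (i.2 * x) • i.1 = x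
  sum_fst_mul_snd : ∑ i ∈ T, i.1 * i.2 = 1

variable {s : B →ₗ[k] B ⊗[k] B} {δ : B →ₗ[k] k} {T : Finset (B × B)}

theorem exists_isSeparableFrobeniusBasis
    (hcounitl : ∀ x : B, (TensorProduct.lid k B) ((δ.rTensor B) (s x)) = x)
    (hcounitr : ∀ x : B, (TensorProduct.rid k B) ((LinearMap.lTensor B δ) (s x)) = x)
    (hbim : ∀ x y : B, s x * ((1 : B) ⊗ₜ[k] y) = s (x * y) ∧ s (x * y) = (x ⊗ₜ[k] (1 : B)) * s y)
    (hsep : ∀ x : B, LinearMap.mul' k B (s x) = x) :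
    ∃ T : Finset (B × B), s 1 = ∑ i ∈ T, i.1 ⊗ₜ[k] i.2 ∧ IsSeparableFrobeniusBasis δ T := by
  obtain ⟨T, hT⟩ := TensorProduct.exists_finset (s 1)
  have s_eq_sum_mul_tmul (x : B) : s x = ∑ i ∈ T, (x * i.1) ⊗ₜ[k] i.2 := by
    rw [← mul_one x, (hbim x 1).2, hT, Finset.mul_sum, mul_one]
    simp only [Algebra.TensorProduct.tmul_mul_tmul, one_mul]
  have s_eq_sum_tmul_mul (x : B) : s x = ∑ i ∈ T, i.1 ⊗ₜ[k] (i.2 * x) := by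
    rw [← one_mul x, ← (hbim 1 x).1, hT, Finset.sum_mul, one_mul]
    simp only [Algebra.TensorProduct.tmul_mul_tmul, mul_one]
  refine ⟨T, hT, ⟨fun x => by rw [← s_eq_sum_mul_tmul, s_eq_sum_tmul_mul], fun x => ?_,
    fun x => ?_, ?_⟩⟩
  · simpa [s_eq_sum_mul_tmul x, map_sum] using hcounitl x
  · simpa [s_eq_sum_tmul_mul x, map_sum] using hcounitr x
  · simpa [hT, map_sum] using hsep 1

namespace IsSeparableFrobeniusBasis

/-- `p² = p` in `B ⊗ Bᵐᵒᵖ`. -/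
theorem sum_sum_mul_tmul_mul (h : IsSeparableFrobeniusBasis δ T) :
    ∑ j ∈ T, ∑ i ∈ T, (j.1 * i.1) ⊗ₜ[k] (i.2 * j.2) = ∑ i ∈ T, i.1 ⊗ₜ[k] i.2 := by
  have casimir_mulLeft (j : B × B) :
      ∑ i ∈ T, (j.1 * i.1) ⊗ₜ[k] (i.2 * j.2) = ∑ i ∈ T, (j.1 * j.2 * i.1) ⊗ₜ[k] i.2 := by
    simpa [map_sum, mul_assoc] using
      congrArg (TensorProduct.map (LinearMap.mulLeft k j.1) LinearMap.id) (h.casimir j.2)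
  simp_rw [casimir_mulLeft]
  rw [Finset.sum_comm]
  simp_rw [← TensorProduct.sum_tmul, ← Finset.sum_mul, h.sum_fst_mul_snd, one_mul]

theorem sum_counit_mul_counit_snd_mul (h : IsSeparableFrobeniusBasis δ T) (u v w : B) :
    ∑ i ∈ T, δ (u * (i.1 * v)) * δ (i.2 * w) = δ (u * (w * v)) := by
  conv_rhs => rw [← h.sum_counit_snd_mul_smul w]
  simp [Finset.sum_mul, Finset.mul_sum, map_sum, mul_comm]

theorem sum_counit_mul_fst_mul_counit (h : IsSeparableFrobeniusBasis δ T) (u v w : B) :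
    ∑ i ∈ T, δ (w * i.1) * δ (u * (i.2 * v)) = δ (u * (w * v)) := by
  conv_rhs => rw [← h.sum_counit_mul_fst_smul w]
  simp [Finset.sum_mul, Finset.mul_sum, map_sum]

end IsSeparableFrobeniusBasis

theorem nakayama_eq_sum (hT : s 1 = ∑ i ∈ T, i.1 ⊗ₜ[k] i.2) (a : B) :
    nakayama k B s δ a = ∑ i ∈ T, δ (a * i.2) • i.1 := by
  simp [nakayama, hT, Finset.mul_sum, Algebra.TensorProduct.tmul_mul_tmul]

theorem sum_counit_mul_snd_mul_smul (hT : s 1 = ∑ i ∈ T, i.1 ⊗ₜ[k] i.2)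
    (h : IsSeparableFrobeniusBasis δ T) (a x : B) :
    ∑ i ∈ T, δ (a * (i.2 * x)) • i.1 = x * nakayama k B s δ a := by
  have hx := congrArg ((TensorProduct.rid k B).toLinearMap ∘ₗ
    TensorProduct.map LinearMap.id (δ ∘ₗ LinearMap.mulLeft k a)) (h.casimir x)
  simp only [map_sum, LinearMap.comp_apply, TensorProduct.map_tmul, LinearMap.id_apply,
    LinearMap.mulLeft_apply, LinearEquiv.coe_coe, TensorProduct.rid_tmul] at hx
  rw [hx, nakayama_eq_sum hT, Finset.mul_sum]
  simp_rw [mul_smul_comm]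

theorem sum_nakayama_snd_mul_fst (hT : s 1 = ∑ i ∈ T, i.1 ⊗ₜ[k] i.2)
    (h : IsSeparableFrobeniusBasis δ T) :
    ∑ i ∈ T, nakayama k B s δ i.2 * i.1 = 1 := by
  simp_rw [nakayama_eq_sum hT, Finset.sum_mul, smul_mul_assoc]
  rw [Finset.sum_comm]
  simp_rw [← mul_smul_comm, ← Finset.mul_sum, h.sum_counit_snd_mul_smul, h.sum_fst_mul_snd]

theorem bopComul_tmul (hT : s 1 = ∑ i ∈ T, i.1 ⊗ₜ[k] i.2) (a : B) (α : Bᵐᵒᵖ) :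
    bopComul k B s (a ⊗ₜ[k] α) = ∑ i ∈ T, (a ⊗ₜ[k] op i.1) ⊗ₜ[k] (i.2 ⊗ₜ[k] α) := by
  simp only [bopComul, sepE, hT, map_sum, LinearMap.comp_apply, TensorProduct.map_tmul,
    TensorProduct.mk_apply, LinearMap.flip_apply, LinearMap.mulRight_apply,
    coe_opLinearEquiv_toLinearMap]
  rw [Finset.mul_sum T (fun i => ((1 : B) ⊗ₜ[k] op i.1) ⊗ₜ[k] (i.2 ⊗ₜ[k] op (1 : B)))]
  simp [Algebra.TensorProduct.tmul_mul_tmul]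

theorem bopCounit_tmul (a : B) (α : Bᵐᵒᵖ) :
    bopCounit k B δ (a ⊗ₜ[k] α) = δ (a * unop α) := rfl

theorem bopAntipode_tmul (a : B) (α : Bᵐᵒᵖ) :
    bopAntipode k B s δ (a ⊗ₜ[k] α) = unop α ⊗ₜ[k] op (nakayama k B s δ a) := rfl

theorem bopComul_coassoc (hT : s 1 = ∑ i ∈ T, i.1 ⊗ₜ[k] i.2) :
    (TensorProduct.assoc k _ _ _).toLinearMap ∘ₗ (bopComul k B s).rTensor _ ∘ₗ bopComul k B s
      = (bopComul k B s).lTensor _ ∘ₗ bopComul k B s := by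
  refine TensorProduct.ext' fun a α => ?_
  simp only [LinearMap.comp_apply, bopComul_tmul hT, map_sum, LinearMap.rTensor_tmul,
    LinearMap.lTensor_tmul, TensorProduct.sum_tmul, TensorProduct.tmul_sum,
    LinearEquiv.coe_coe, TensorProduct.assoc_tmul]
  exact Finset.sum_comm

theorem lid_bopCounit_rTensor_bopComul (hT : s 1 = ∑ i ∈ T, i.1 ⊗ₜ[k] i.2)
    (h : IsSeparableFrobeniusBasis δ T) (x : B ⊗[k] Bᵐᵒᵖ) :
    TensorProduct.lid k _ ((bopCounit k B δ).rTensor _ (bopComul k B s x)) = x := by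
  induction x using TensorProduct.induction_on with
  | zero => simp
  | add x y hx hy => simp only [map_add, hx, hy]
  | tmul a α =>
    simp only [bopComul_tmul hT, map_sum, LinearMap.rTensor_tmul, bopCounit_tmul, unop_op,
      TensorProduct.lid_tmul, TensorProduct.smul_tmul', ← TensorProduct.sum_tmul,
      h.sum_counit_mul_fst_smul]

theorem rid_bopCounit_lTensor_bopComul (hT : s 1 = ∑ i ∈ T, i.1 ⊗ₜ[k] i.2)
    (h : IsSeparableFrobeniusBasis δ T) (x : B ⊗[k] Bᵐᵒᵖ) :
    TensorProduct.rid k _ ((bopCounit k B δ).lTensor _ (bopComul k B s x)) = x := by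
  induction x using TensorProduct.induction_on with
  | zero => simp
  | add x y hx hy => simp only [map_add, hx, hy]
  | tmul a α =>
    have hα : ∑ i ∈ T, δ (i.2 * unop α) • op i.1 = α := by
      simpa [map_sum] using congrArg op (h.sum_counit_snd_mul_smul (unop α))
    simp only [bopComul_tmul hT, map_sum, LinearMap.lTensor_tmul, bopCounit_tmul,
      TensorProduct.rid_tmul, ← TensorProduct.tmul_smul, ← TensorProduct.tmul_sum, hα]

theorem bopComul_mul (hT : s 1 = ∑ i ∈ T, i.1 ⊗ₜ[k] i.2) (h : IsSeparableFrobeniusBasis δ T)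
    (x y : B ⊗[k] Bᵐᵒᵖ) :
    bopComul k B s (x * y)
      = mulT k _ (LinearMap.mul k _) (bopComul k B s x) (bopComul k B s y) := by
  induction x using TensorProduct.induction_on with
  | zero => simp
  | add x x' hx hx' => simp only [add_mul, map_add, LinearMap.add_apply, hx, hx']
  | tmul a α =>
    induction y using TensorProduct.induction_on with
    | zero => simp
    | add y y' hy hy' => simp only [mul_add, map_add, hy, hy']
    | tmul c γ =>
      have hp := congrArg (TensorProduct.map ((TensorProduct.mk k B Bᵐᵒᵖ (a * c)) ∘ₗ
        (opLinearEquiv k (M := B)).toLinearMap) ((TensorProduct.mk k B Bᵐᵒᵖ).flip (α * γ)))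
          h.sum_sum_mul_tmul_mul
      simp only [map_sum, TensorProduct.map_tmul, LinearMap.comp_apply, TensorProduct.mk_apply,
        LinearMap.flip_apply, coe_opLinearEquiv_toLinearMap] at hp
      simp only [Algebra.TensorProduct.tmul_mul_tmul, bopComul_tmul hT, map_sum,
        LinearMap.sum_apply, mulT_tmul, LinearMap.mul_apply', ← op_mul]
      rw [← hp, Finset.sum_comm]

theorem bop_weakCounit_left (hT : s 1 = ∑ i ∈ T, i.1 ⊗ₜ[k] i.2)
    (h : IsSeparableFrobeniusBasis δ T) (x y z : B ⊗[k] Bᵐᵒᵖ) :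
    LinearMap.mul' k k (TensorProduct.map (bopCounit k B δ ∘ₗ LinearMap.mul k _ x)
      (bopCounit k B δ ∘ₗ (LinearMap.mul k _).flip z) (bopComul k B s y))
      = bopCounit k B δ (x * y * z) := by
  induction x using TensorProduct.induction_on with
  | zero => simp
  | add x x' hx hx' =>
    simp only [map_add, add_mul, LinearMap.add_apply, LinearMap.comp_add,
      TensorProduct.map_add_left, hx, hx']
  | tmul a α =>
    induction z using TensorProduct.induction_on with
    | zero => simp
    | add z z' hz hz' =>
      simp only [map_add, mul_add, LinearMap.add_apply, LinearMap.comp_add,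
        TensorProduct.map_add_right, hz, hz']
    | tmul c γ =>
      induction y using TensorProduct.induction_on with
      | zero => simp
      | add y y' hy hy' => simp only [map_add, mul_add, add_mul, hy, hy']
      | tmul b β =>
        simp only [LinearMap.comp_apply, LinearMap.flip_apply, bopComul_tmul hT, map_sum,
          TensorProduct.map_tmul, LinearMap.mul_apply', Algebra.TensorProduct.tmul_mul_tmul,
          bopCounit_tmul, unop_mul, unop_op, LinearMap.mul'_apply, mul_assoc]
        simpa only [mul_assoc] using
          h.sum_counit_mul_counit_snd_mul (a * b) (unop α) (c * (unop γ * unop β))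

theorem bop_weakCounit_right (hT : s 1 = ∑ i ∈ T, i.1 ⊗ₜ[k] i.2)
    (h : IsSeparableFrobeniusBasis δ T) (x y z : B ⊗[k] Bᵐᵒᵖ) :
    LinearMap.mul' k k (TensorProduct.map (bopCounit k B δ ∘ₗ (LinearMap.mul k _).flip z)
      (bopCounit k B δ ∘ₗ LinearMap.mul k _ x) (bopComul k B s y))
      = bopCounit k B δ (x * y * z) := by
  induction x using TensorProduct.induction_on with
  | zero => simp
  | add x x' hx hx' =>
    simp only [map_add, add_mul, LinearMap.add_apply, LinearMap.comp_add,
      TensorProduct.map_add_right, hx, hx']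
  | tmul a α =>
    induction z using TensorProduct.induction_on with
    | zero => simp
    | add z z' hz hz' =>
      simp only [map_add, mul_add, LinearMap.add_apply, LinearMap.comp_add,
        TensorProduct.map_add_left, hz, hz']
    | tmul c γ =>
      induction y using TensorProduct.induction_on with
      | zero => simp
      | add y y' hy hy' => simp only [map_add, mul_add, add_mul, hy, hy']
      | tmul b β =>
        simp only [LinearMap.comp_apply, LinearMap.flip_apply, bopComul_tmul hT, map_sum,
          TensorProduct.map_tmul, LinearMap.mul_apply', Algebra.TensorProduct.tmul_mul_tmul,
          bopCounit_tmul, unop_mul, unop_op, LinearMap.mul'_apply, mul_assoc]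
        simpa only [mul_assoc] using
          h.sum_counit_mul_fst_mul_counit a (unop β * unop α) (b * (c * unop γ))

theorem bop_weakUnit_left (hT : s 1 = ∑ i ∈ T, i.1 ⊗ₜ[k] i.2) :
    mulT3 k _ (LinearMap.mul k (B ⊗[k] Bᵐᵒᵖ))
      (TensorProduct.map LinearMap.id ((TensorProduct.mk k _ _).flip 1) (bopComul k B s 1))
      (TensorProduct.mk k _ _ 1 (bopComul k B s 1))
      = (bopComul k B s).lTensor _ (bopComul k B s 1) := by
  simp only [Algebra.TensorProduct.one_def, bopComul_tmul hT, map_sum, TensorProduct.map_tmul,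
    LinearMap.id_apply, LinearMap.flip_apply, TensorProduct.mk_apply, TensorProduct.tmul_sum,
    LinearMap.sum_apply, mulT3_tmul, mulT_tmul, LinearMap.mul_apply', LinearMap.lTensor_tmul,
    Algebra.TensorProduct.tmul_mul_tmul, one_mul, mul_one]
  exact Finset.sum_comm

theorem bop_weakUnit_right (hT : s 1 = ∑ i ∈ T, i.1 ⊗ₜ[k] i.2) :
    mulT3 k _ (LinearMap.mul k (B ⊗[k] Bᵐᵒᵖ))
      (TensorProduct.mk k _ _ 1 (bopComul k B s 1))
      (TensorProduct.map LinearMap.id ((TensorProduct.mk k _ _).flip 1) (bopComul k B s 1))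
      = (bopComul k B s).lTensor _ (bopComul k B s 1) := by
  simp only [Algebra.TensorProduct.one_def, bopComul_tmul hT, map_sum, TensorProduct.map_tmul,
    LinearMap.id_apply, LinearMap.flip_apply, TensorProduct.mk_apply, TensorProduct.tmul_sum,
    LinearMap.sum_apply, mulT3_tmul, mulT_tmul, LinearMap.mul_apply', LinearMap.lTensor_tmul,
    Algebra.TensorProduct.tmul_mul_tmul, one_mul, mul_one]

theorem bop_mul_antipode (hT : s 1 = ∑ i ∈ T, i.1 ⊗ₜ[k] i.2)
    (h : IsSeparableFrobeniusBasis δ T) (x : B ⊗[k] Bᵐᵒᵖ) :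
    m2 k _ (LinearMap.mul k _) ((bopAntipode k B s δ).lTensor _ (bopComul k B s x))
      = TensorProduct.lid k _ (TensorProduct.map (bopCounit k B δ ∘ₗ (LinearMap.mul k _).flip x)
          LinearMap.id (bopComul k B s 1)) := by
  induction x using TensorProduct.induction_on with
  | zero => simp
  | add x y hx hy => simp only [map_add, LinearMap.comp_add, TensorProduct.map_add_left,
      LinearMap.add_apply, hx, hy]
  | tmul a α =>
    have hτ : ∑ i ∈ T, op (nakayama k B s δ i.2 * i.1) = 1 := by
      rw [← Finset.op_sum, sum_nakayama_snd_mul_fst hT h, op_one]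
    simp only [Algebra.TensorProduct.one_def, bopComul_tmul hT, map_sum,
      LinearMap.lTensor_tmul, bopAntipode_tmul, m2_tmul, LinearMap.mul_apply',
      Algebra.TensorProduct.tmul_mul_tmul, ← op_mul, ← TensorProduct.tmul_sum, hτ,
      TensorProduct.map_tmul, LinearMap.comp_apply, LinearMap.flip_apply, bopCounit_tmul,
      unop_mul, unop_op, one_mul, LinearMap.id_apply, TensorProduct.lid_tmul,
      TensorProduct.smul_tmul', ← TensorProduct.sum_tmul]
    simpa only [mul_assoc] using (congrArg (· ⊗ₜ[k] (1 : Bᵐᵒᵖ))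
      (h.sum_counit_mul_fst_smul (a * unop α))).symm

theorem bop_antipode_mul (hT : s 1 = ∑ i ∈ T, i.1 ⊗ₜ[k] i.2)
    (h : IsSeparableFrobeniusBasis δ T) (x : B ⊗[k] Bᵐᵒᵖ) :
    m2 k _ (LinearMap.mul k _) ((bopAntipode k B s δ).rTensor _ (bopComul k B s x))
      = TensorProduct.rid k _ (TensorProduct.map LinearMap.id
          (bopCounit k B δ ∘ₗ LinearMap.mul k _ x) (bopComul k B s 1)) := by
  induction x using TensorProduct.induction_on with
  | zero => simp
  | add x y hx hy => simp only [map_add, LinearMap.comp_add, TensorProduct.map_add_right,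
      LinearMap.add_apply, hx, hy]
  | tmul a α =>
    have hτ : ∑ i ∈ T, δ (a * i.2 * unop α) • op i.1 = op (unop α * nakayama k B s δ a) := by
      rw [← sum_counit_mul_snd_mul_smul hT h, Finset.op_sum]
      simp only [mul_assoc, op_smul]
    simp only [Algebra.TensorProduct.one_def, bopComul_tmul hT, map_sum,
      LinearMap.rTensor_tmul, bopAntipode_tmul, m2_tmul, LinearMap.mul_apply',
      Algebra.TensorProduct.tmul_mul_tmul, unop_op, ← TensorProduct.sum_tmul,
      h.sum_fst_mul_snd, TensorProduct.map_tmul, LinearMap.comp_apply, bopCounit_tmul,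
      mul_one, LinearMap.id_apply, TensorProduct.rid_tmul, ← TensorProduct.tmul_smul,
      ← TensorProduct.tmul_sum, hτ]
    rw [op_mul, op_unop]

theorem bop_antipode_mul_antipode (hT : s 1 = ∑ i ∈ T, i.1 ⊗ₜ[k] i.2)
    (h : IsSeparableFrobeniusBasis δ T) (x : B ⊗[k] Bᵐᵒᵖ) :
    m2 k _ (LinearMap.mul k _) (TensorProduct.map (bopAntipode k B s δ)
        (m2 k _ (LinearMap.mul k _) ∘ₗ (bopAntipode k B s δ).lTensor _)
        ((bopComul k B s).lTensor _ (bopComul k B s x)))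
      = bopAntipode k B s δ x := by
  induction x using TensorProduct.induction_on with
  | zero => simp
  | add x y hx hy => simp only [map_add, hx, hy]
  | tmul a α =>
    simp only [bopComul_tmul hT, map_sum, LinearMap.lTensor_tmul, TensorProduct.map_tmul,
      LinearMap.comp_apply, bopAntipode_tmul, m2_tmul, LinearMap.mul_apply',
      Algebra.TensorProduct.tmul_mul_tmul, unop_op, ← op_mul, ← TensorProduct.tmul_sum,
      ← Finset.op_sum, sum_nakayama_snd_mul_fst hT h, op_one, mul_one,
      ← TensorProduct.sum_tmul, ← mul_assoc, ← Finset.sum_mul, h.sum_fst_mul_snd, one_mul]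

end

theorem bop_isWeakHopf
    (s : B →ₗ[k] B ⊗[k] B) (δ : B →ₗ[k] k)
    (hcounitl : ∀ x : B, (TensorProduct.lid k B) ((δ.rTensor B) (s x)) = x)
    (hcounitr : ∀ x : B, (TensorProduct.rid k B) ((LinearMap.lTensor B δ) (s x)) = x)
    (hbim : ∀ x y : B, s x * ((1 : B) ⊗ₜ[k] y) = s (x * y) ∧ s (x * y) = (x ⊗ₜ[k] (1 : B)) * s y)
    (hsep : ∀ x : B, LinearMap.mul' k B (s x) = x) :
    IsWeakHopf k (B ⊗[k] Bᵐᵒᵖ) (LinearMap.mul k (B ⊗[k] Bᵐᵒᵖ)) 1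
      (bopComul k B s) (bopCounit k B δ) (bopAntipode k B s δ) := by
  obtain ⟨T, hT, h⟩ := exists_isSeparableFrobeniusBasis hcounitl hcounitr hbim hsep
  exact
    { mul_assoc' := mul_assoc
      one_mul' := one_mul
      mul_one' := mul_one
      coassoc' := bopComul_coassoc hT
      counit_comul' := lid_bopCounit_rTensor_bopComul hT h
      comul_counit' := rid_bopCounit_lTensor_bopComul hT h
      comul_mul := bopComul_mul hT h
      weak_counit₁ := bop_weakCounit_left hT h
      weak_counit₂ := bop_weakCounit_right hT h
      weak_unit₁ := bop_weakUnit_left hT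
      weak_unit₂ := bop_weakUnit_right hT
      antipode₁ := bop_mul_antipode hT h
      antipode₂ := bop_antipode_mul hT h
      antipode₃ := bop_antipode_mul_antipode hT h }

end
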